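/- Let g be a positive integer, τ ∈ ℍ_g, z ∈ ℂ^g, and let k₁ < k₂ < k₃ be integers, a₁, a₂, a₃, b₁, b₂, b₃ ∈ ℝ^g, λ₁ ∈ {0,…,k₂−k₁−1}^g, λ₂ ∈ {0,…,k₃−k₂−1}^g. Set N := (k₂−k₁)(k₃−k₂)(k₃−k₁), and for w ∈ {0,…,k₃−k₁−1}^g set S_w := (k₃−k₂)(λ₁ + b₂ − b₁) − (k₂−k₁)(λ₂ + b₃ − b₂) − (k₂−k₁)(k₃−k₂)w and D^w := ϑ[−S_w/N, (k₂−k₁)(a₃−a₂) − (k₃−k₂)(a₂−a₁)](Nτ, 0). Then ϑ[(λ₂+b₃−b₂)/(k₃−k₂), a₃−a₂]((k₃−k₂)τ, (k₃−k₂)z) · ϑ[(λ₁+b₂−b₁)/(k₂−k₁), a₂−a₁]((k₂−k₁)τ, (k₂−k₁)z) = Σ_{w ∈ {0,…,k₃−k₁−1}^g} D^w · ϑ[(λ₁+λ₂+b₃−b₁+(k₃−k₂)w)/(k₃−k₁), a₃−a₁]((k₃−k₁)τ, (k₃−k₁)z). (The theta multiplication formula matching the Floer product μ².) -/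

import Mathlib

open Complex Matrix BigOperators Real

noncomputable section

/-- The quadratic form `vᵀ τ v = ∑_{j,k} τ_{jk} v_j v_k`. -/
def qf {g : ℕ} (τ : Matrix (Fin g) (Fin g) ℂ) (v : Fin g → ℂ) : ℂ :=
  ∑ j, ∑ k, v j * τ j k * v k

/-- The pairing `vᵀ w = ∑_j v_j w_j`. -/
def dotc {g : ℕ} (v w : Fin g → ℂ) : ℂ := ∑ j, v j * w j

/-- The Siegel upper half space `ℍ_g`. -/
def Siegel (g : ℕ) : Set (Matrix (Fin g) (Fin g) ℂ) :=
  {τ | τ.IsSymm ∧ (τ.map Complex.im).PosDef}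

/-- The shifted Riemann theta function
`ϑ[c,d](τ,z) = ∑_{n ∈ ℤ^g} exp(πi·(n+c)ᵀτ(n+c) + 2πi·(n+c)ᵀ(z+d))`. -/
def thetaS {g : ℕ} (c d : Fin g → ℝ) (τ : Matrix (Fin g) (Fin g) ℂ)
    (z : Fin g → ℂ) : ℂ :=
  ∑' n : Fin g → ℤ,
    Complex.exp ((π : ℂ) * I * qf τ (fun j => (n j : ℂ) + (c j : ℂ)) +
      2 * (π : ℂ) * I * dotc (fun j => (n j : ℂ) + (c j : ℂ)) (z + fun j => (d j : ℂ)))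

set_option maxHeartbeats 1000000

/-! ### Auxiliary summability lemmas -/

lemma summable_exp_int_aux (a b c : ℝ) (ha : 0 < a) :
    Summable fun k : ℤ => Real.exp (-a * ((k : ℝ) + c) ^ 2 + b * |(k : ℝ) + c|) := by
  set D : ℝ := (|b| + 1) ^ 2 / (4 * a) with hDdef
  have hD : 4 * a * D = (|b| + 1) ^ 2 := by rw [hDdef]; field_simp
  set C : ℝ := |c| + D with hC
  have key : ∀ k : ℤ, -a * ((k : ℝ) + c) ^ 2 + b * |(k : ℝ) + c| ≤ C - |(k : ℝ)| := by
    intro k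
    set x : ℝ := (k : ℝ)
    set w : ℝ := |x + c| with hwdef
    have hw : |x| ≤ w + |c| := by
      calc |x| = |(x + c) + (-c)| := by ring_nf
      _ ≤ |x + c| + |(-c)| := abs_add_le _ _
      _ = w + |c| := by rw [abs_neg]
    have hb : b * w ≤ |b| * w := mul_le_mul_of_nonneg_right (le_abs_self b) (abs_nonneg _)
    have hsq : 0 ≤ (2 * a * w - (|b| + 1)) ^ 2 := sq_nonneg _
    have habs : w ^ 2 = (x + c) ^ 2 := sq_abs _
    have h2 : -a * w ^ 2 + |b| * w ≤ D - w := by nlinarith [hsq, hD, ha]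
    have h1 : -a * (x + c) ^ 2 + b * w ≤ -a * w ^ 2 + |b| * w := by rw [habs]; linarith
    linarith
  have hgeo : Summable fun k : ℤ => Real.exp (-1 : ℝ) ^ k.natAbs := by
    apply Summable.of_nat_of_neg
    · simpa using summable_geometric_of_lt_one (le_of_lt (Real.exp_pos _))
        (Real.exp_lt_one_iff.2 (by norm_num))
    · simpa using summable_geometric_of_lt_one (le_of_lt (Real.exp_pos _))
        (Real.exp_lt_one_iff.2 (by norm_num : (-1:ℝ) < 0))
  have hmaj : Summable fun k : ℤ => Real.exp C * Real.exp (-|(k : ℝ)|) := by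
    apply Summable.mul_left
    have h3 : ∀ k : ℤ, Real.exp (-|(k : ℝ)|) = Real.exp (-1 : ℝ) ^ k.natAbs := by
      intro k
      rw [← Real.exp_nat_mul]
      congr 1
      have h4 : ((k.natAbs : ℕ) : ℝ) = |(k : ℝ)| := by
        rw [Nat.cast_natAbs]
        push_cast
        ring
      rw [h4]; ring
    exact (summable_congr h3).2 hgeo
  apply Summable.of_nonneg_of_le (fun k => (Real.exp_pos _).le) _ hmaj
  intro k
  rw [← Real.exp_add]
  exact Real.exp_le_exp.2 (by linarith [key k])

lemma summable_pi_prod_aux : ∀ (G : ℕ) (F : Fin G → ℤ → ℝ), (∀ j x, 0 ≤ F j x) →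
    (∀ j, Summable (F j)) →
    Summable fun v : Fin G → ℤ => ∏ j, F j (v j) := by
  intro G
  induction G with
  | zero => intro F _ _; exact .of_finite
  | succ G ih =>
    intro F h0 hs
    have hIH : Summable fun v : Fin G → ℤ => ∏ j : Fin G, F j.succ (v j) :=
      ih (fun j => F j.succ) (fun j x => h0 _ _) (fun j => hs j.succ)
    have h2 : Summable fun p : ℤ × (Fin G → ℤ) => F 0 p.1 * ∏ j : Fin G, F j.succ (p.2 j) := by
      apply Summable.mul_of_nonneg (hs 0) hIH (fun x => h0 0 x)
      exact fun v => Finset.prod_nonneg fun j _ => h0 _ _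
    rw [← Equiv.summable_iff (Fin.consEquiv fun _ : Fin (G+1) => ℤ)]
    apply h2.congr
    intro p
    simp [Fin.consEquiv, Fin.prod_univ_succ]

lemma posdef_quad_lower {g : ℕ} (hg : 0 < g) (Y : Matrix (Fin g) (Fin g) ℝ) (hY : Y.PosDef) :
    ∃ μ > 0, ∀ v : Fin g → ℝ, μ * ∑ j, v j ^ 2 ≤ ∑ j, ∑ k, v j * Y j k * v k := by
  haveI : Nonempty (Fin g) := ⟨⟨0, hg⟩⟩
  set Q : (Fin g → ℝ) → ℝ := fun v => ∑ j, ∑ k, v j * Y j k * v k with hQ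
  have hQsmul : ∀ (a : ℝ) (w : Fin g → ℝ), Q (a • w) = a ^ 2 * Q w := by
    intro a w
    simp only [hQ, Pi.smul_apply, smul_eq_mul, Finset.mul_sum]
    exact Finset.sum_congr rfl fun j _ => Finset.sum_congr rfl fun k _ => by ring
  have hQpos : ∀ v : Fin g → ℝ, v ≠ 0 → 0 < Q v := by
    intro v hv
    have h := hY.dotProduct_mulVec_pos hv
    simpa [dotProduct, star_trivial, Matrix.mulVec, Finset.mul_sum, mul_assoc, hQ] using h
  have hQcont : Continuous Q := by
    apply continuous_finset_sum
    intro j _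
    apply continuous_finset_sum
    intro k _
    exact ((continuous_apply j).mul continuous_const).mul (continuous_apply k)
  have hmem : (fun _ : Fin g => (1 : ℝ)) ∈ Metric.sphere (0 : Fin g → ℝ) 1 := by
    simp [mem_sphere_iff_norm]
  obtain ⟨u, hu, hmin⟩ := (isCompact_sphere (0 : Fin g → ℝ) 1).exists_isMinOn
    ⟨_, hmem⟩ hQcont.continuousOn
  have hunorm : ‖u‖ = 1 := by simpa [mem_sphere_iff_norm] using hu
  have huz : u ≠ 0 := by
    intro h; rw [h] at hunorm; simp at hunorm
  have hμ0 : 0 < Q u := hQpos u huz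
  refine ⟨Q u / g, by positivity, ?_⟩
  intro v
  by_cases hv : v = 0
  · simp [hv, hQ]
  · have hvn : (0:ℝ) < ‖v‖ := norm_pos_iff.2 hv
    set w : Fin g → ℝ := ‖v‖⁻¹ • v with hw
    have hwmem : w ∈ Metric.sphere (0 : Fin g → ℝ) 1 := by
      simp [hw, mem_sphere_iff_norm, norm_smul, abs_of_pos (inv_pos.2 hvn),
        inv_mul_cancel₀ hvn.ne']
    have hQv : Q v = ‖v‖ ^ 2 * Q w := by
      rw [hw, hQsmul]
      have h5 : ‖v‖ ^ 2 * (‖v‖⁻¹ ^ 2 * Q v) = (‖v‖ * ‖v‖⁻¹) ^ 2 * Q v := by ring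
      rw [h5, mul_inv_cancel₀ hvn.ne']
      ring
    have hQw : Q u ≤ Q w := hmin hwmem
    have hsum : ∑ j, v j ^ 2 ≤ g * ‖v‖ ^ 2 := by
      calc ∑ j, v j ^ 2 ≤ ∑ _j : Fin g, ‖v‖ ^ 2 := by
            apply Finset.sum_le_sum
            intro j _
            have h1 : |v j| ≤ ‖v‖ := by
              simpa using norm_le_pi_norm v j
            calc v j ^ 2 = |v j| ^ 2 := (_root_.sq_abs _).symm
            _ ≤ ‖v‖ ^ 2 := by
                apply pow_le_pow_left₀ (abs_nonneg _) h1
      _ = g * ‖v‖ ^ 2 := by simp [Finset.sum_const, Finset.card_univ, mul_comm]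
    have hg' : (0:ℝ) < g := by exact_mod_cast hg
    calc Q u / g * ∑ j, v j ^ 2 ≤ Q u / g * (g * ‖v‖ ^ 2) := by
          apply mul_le_mul_of_nonneg_left hsum (by positivity)
    _ = Q u * ‖v‖ ^ 2 := by field_simp
    _ ≤ Q w * ‖v‖ ^ 2 := by nlinarith
    _ = Q v := by rw [hQv]; ring

lemma theta_norm_summable {g : ℕ} (hg : 0 < g) (τ : Matrix (Fin g) (Fin g) ℂ)
    (hτ : (τ.map Complex.im).PosDef) (c : Fin g → ℝ) (ζ : Fin g → ℂ) :
    Summable fun n : Fin g → ℤ =>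
      ‖Complex.exp ((π : ℂ) * I * qf τ (fun j => (n j : ℂ) + (c j : ℂ)) +
        2 * (π : ℂ) * I * dotc (fun j => (n j : ℂ) + (c j : ℂ)) ζ)‖ := by
  obtain ⟨μ, hμ, hlow⟩ := posdef_quad_lower hg _ hτ
  set b : Fin g → ℝ := fun j => 2 * π * |(ζ j).im| with hb
  set F : Fin g → ℤ → ℝ := fun j k =>
    Real.exp (-(π * μ) * ((k : ℝ) + c j) ^ 2 + b j * |(k : ℝ) + c j|) with hF
  have hFs : Summable fun v : Fin g → ℤ => ∏ j, F j (v j) :=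
    summable_pi_prod_aux g F (fun j x => (Real.exp_pos _).le)
      (fun j => summable_exp_int_aux _ _ _ (by positivity))
  apply Summable.of_nonneg_of_le (fun n => norm_nonneg _) _ hFs
  intro n
  set v : Fin g → ℝ := fun j => (n j : ℝ) + c j with hv
  have hre : ((π : ℂ) * I * qf τ (fun j => (n j : ℂ) + (c j : ℂ)) +
      2 * (π : ℂ) * I * dotc (fun j => (n j : ℂ) + (c j : ℂ)) ζ).re
      = -π * (∑ j, ∑ k, v j * (τ.map Complex.im) j k * v k)
        - 2 * π * ∑ j, v j * (ζ j).im := by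
    have hQim : (qf τ fun j => (n j : ℂ) + (c j : ℂ)).im
        = ∑ j, ∑ k, v j * (τ.map Complex.im) j k * v k := by
      rw [qf, Complex.im_sum]
      refine Finset.sum_congr rfl fun j _ => ?_
      rw [Complex.im_sum]
      refine Finset.sum_congr rfl fun k _ => ?_
      simp [Complex.mul_im, Complex.mul_re, Matrix.map_apply, hv]
    have hLim : (dotc (fun j => (n j : ℂ) + (c j : ℂ)) ζ).im = ∑ j, v j * (ζ j).im := by
      rw [dotc, Complex.im_sum]
      refine Finset.sum_congr rfl fun j _ => ?_
      simp [Complex.mul_im, hv]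
    rw [Complex.add_re]
    have e1 : ((π : ℂ) * I * qf τ (fun j => (n j : ℂ) + (c j : ℂ))).re
        = -π * (qf τ fun j => (n j : ℂ) + (c j : ℂ)).im := by
      simp [Complex.mul_re, Complex.mul_im]
    have e2 : (2 * (π : ℂ) * I * dotc (fun j => (n j : ℂ) + (c j : ℂ)) ζ).re
        = -(2 * π) * (dotc (fun j => (n j : ℂ) + (c j : ℂ)) ζ).im := by
      simp [Complex.mul_re, Complex.mul_im]
    rw [e1, e2, hQim, hLim]
    ring
  rw [Complex.norm_exp, hre]
  have hbound : -π * (∑ j, ∑ k, v j * (τ.map Complex.im) j k * v k)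
      - 2 * π * ∑ j, v j * (ζ j).im
      ≤ ∑ j, (-(π * μ) * (v j) ^ 2 + b j * |v j|) := by
    have h1 : -π * (∑ j, ∑ k, v j * (τ.map Complex.im) j k * v k)
        ≤ -π * (μ * ∑ j, v j ^ 2) := by
      have := hlow v
      nlinarith [Real.pi_pos]
    have h2 : -(2 * π * ∑ j, v j * (ζ j).im) ≤ ∑ j, b j * |v j| := by
      rw [Finset.mul_sum, ← Finset.sum_neg_distrib]
      apply Finset.sum_le_sum
      intro j _
      have ha1 : -(v j * (ζ j).im) ≤ |v j * (ζ j).im| := neg_le_abs _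
      have ha2 : |v j * (ζ j).im| = |v j| * |(ζ j).im| := abs_mul _ _
      have h6 : b j * |v j| = 2 * π * (|v j| * |(ζ j).im|) := by rw [hb]; ring
      rw [h6]
      nlinarith [Real.pi_pos]
    have hsplit : ∑ j, (-(π * μ) * (v j) ^ 2 + b j * |v j|)
        = (∑ j, -(π * μ) * (v j) ^ 2) + ∑ j, b j * |v j| := Finset.sum_add_distrib
    have hms : -π * (μ * ∑ j, v j ^ 2) = ∑ j, -(π * μ) * (v j) ^ 2 := by
      rw [Finset.mul_sum, Finset.mul_sum]
      exact Finset.sum_congr rfl fun j _ => by ring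
    rw [hsplit]
    rw [hms] at h1
    linarith
  calc Real.exp (-π * (∑ j, ∑ k, v j * (τ.map Complex.im) j k * v k)
      - 2 * π * ∑ j, v j * (ζ j).im) ≤ Real.exp (∑ j, (-(π * μ) * (v j) ^ 2 + b j * |v j|)) :=
        Real.exp_le_exp.2 hbound
  _ = ∏ j, F j (n j) := by rw [Real.exp_sum]

/-! ### The pointwise exponential identity -/

lemma qf_smul {g : ℕ} (a : ℂ) (τ : Matrix (Fin g) (Fin g) ℂ) (v : Fin g → ℂ) :
    qf (a • τ) v = a * qf τ v := by
  simp only [qf, Matrix.smul_apply, smul_eq_mul, Finset.mul_sum]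
  exact Finset.sum_congr rfl fun j _ => Finset.sum_congr rfl fun k _ => by ring

lemma exp_term_eq {g : ℕ} (τ : Matrix (Fin g) (Fin g) ℂ) (z : Fin g → ℂ)
    (mC nC MC NC : ℂ) (hMne : MC ≠ 0) (hMmn : MC = mC + nC) (hN : NC = mC * nC * MC)
    (X Y S U D₁ D₂ DS DU : Fin g → ℂ)
    (hS : ∀ j, MC * S j = Y j - X j) (hU : ∀ j, MC * U j = mC * X j + nC * Y j)
    (hDS : ∀ j, DS j = mC * D₂ j - nC * D₁ j) (hDU : ∀ j, DU j = D₁ j + D₂ j) :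
    Complex.exp ((π:ℂ) * I * qf (nC • τ) Y + 2 * (π:ℂ) * I * dotc Y (nC • z + D₂)) *
      Complex.exp ((π:ℂ) * I * qf (mC • τ) X + 2 * (π:ℂ) * I * dotc X (mC • z + D₁))
    = Complex.exp ((π:ℂ) * I * qf (NC • τ) S + 2 * (π:ℂ) * I * dotc S (0 + DS)) *
      Complex.exp ((π:ℂ) * I * qf (MC • τ) U + 2 * (π:ℂ) * I * dotc U (MC • z + DU)) := by
  have hSj : ∀ j, S j = (Y j - X j) / MC := fun j => by
    rw [eq_div_iff hMne, mul_comm]; exact hS j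
  have hUj : ∀ j, U j = (mC * X j + nC * Y j) / MC := fun j => by
    rw [eq_div_iff hMne, mul_comm]; exact hU j
  have hq : nC * qf τ Y + mC * qf τ X = NC * qf τ S + MC * qf τ U := by
    simp only [qf, Finset.mul_sum, ← Finset.sum_add_distrib]
    refine Finset.sum_congr rfl fun j _ => ?_
    refine Finset.sum_congr rfl fun k _ => ?_
    rw [hSj j, hSj k, hUj j, hUj k, hN, hMmn]
    have hne' : mC + nC ≠ 0 := hMmn ▸ hMne
    field_simp
    ring
  have hd : dotc Y (nC • z + D₂) + dotc X (mC • z + D₁)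
      = dotc S (0 + DS) + dotc U (MC • z + DU) := by
    simp only [dotc, Pi.add_apply, Pi.smul_apply, Pi.zero_apply, smul_eq_mul,
      ← Finset.sum_add_distrib]
    refine Finset.sum_congr rfl fun j _ => ?_
    rw [hSj j, hUj j, hDS j, hDU j, hMmn]
    have hne' : mC + nC ≠ 0 := hMmn ▸ hMne
    field_simp
    ring
  rw [← Complex.exp_add, ← Complex.exp_add]
  congr 1
  rw [qf_smul, qf_smul, qf_smul, qf_smul]
  linear_combination (π : ℂ) * I * hq + 2 * (π:ℂ) * I * hd

/-! ### The reindexing bijection -/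

def reindexFloer (g : ℕ) (m n M : ℤ) (hm : 0 < m) (hn : 0 < n) (hM : M = m + n) :
    ((Fin g → Fin M.toNat) × ((Fin g → ℤ) × (Fin g → ℤ))) ≃ ((Fin g → ℤ) × (Fin g → ℤ)) where
  toFun x := (fun j => x.2.2 j + m * x.2.1 j + (x.1 j : ℤ), fun j => x.2.2 j - n * x.2.1 j)
  invFun y :=
    (fun j => ⟨((y.1 j - y.2 j) % M).toNat, by
        have hM0 : (0:ℤ) < M := by omega
        have h1 : 0 ≤ (y.1 j - y.2 j) % M := Int.emod_nonneg _ (by omega)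
        have h2 : (y.1 j - y.2 j) % M < M := Int.emod_lt_of_pos _ hM0
        omega⟩,
     fun j => (y.1 j - y.2 j) / M,
     fun j => y.2 j + n * ((y.1 j - y.2 j) / M))
  left_inv := by
    rintro ⟨w, t, r⟩
    have hM0 : (0:ℤ) < M := by omega
    have hd : ∀ j, (r j + m * t j + (w j : ℤ)) - (r j - n * t j) = (w j : ℤ) + M * t j := by
      intro j; linear_combination (-(t j)) * hM
    have hwlt : ∀ j, (w j : ℤ) < M := by
      intro j
      have := (w j).isLt
      omega
    have hmod : ∀ j, ((r j + m * t j + (w j : ℤ)) - (r j - n * t j)) % M = (w j : ℤ) := by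
      intro j
      rw [hd j, Int.add_mul_emod_self_left, Int.emod_eq_of_lt (by positivity) (hwlt j)]
    have hdiv : ∀ j, ((r j + m * t j + (w j : ℤ)) - (r j - n * t j)) / M = t j := by
      intro j
      rw [hd j, Int.add_mul_ediv_left _ _ (by omega : M ≠ 0),
        Int.ediv_eq_zero_of_lt (by positivity) (hwlt j), zero_add]
    refine Prod.ext ?_ (Prod.ext ?_ ?_)
    · funext j
      apply Fin.ext
      simp only [hmod j]
      simp
    · funext j
      simp only [hdiv j]
    · funext j
      simp only [hdiv j]
      ring
  right_inv := by
    rintro ⟨q, p⟩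
    have hM0 : (0:ℤ) < M := by omega
    have htn : ∀ j, (((q j - p j) % M).toNat : ℤ) = (q j - p j) % M := by
      intro j
      exact Int.toNat_of_nonneg (Int.emod_nonneg _ (by omega))
    refine Prod.ext ?_ ?_
    · funext j
      linear_combination htn j + Int.mul_ediv_add_emod (q j - p j) M - ((q j - p j) / M) * hM
    · funext j
      ring

lemma reindexFloer_apply (g : ℕ) (m n M : ℤ) (hm : 0 < m) (hn : 0 < n) (hM : M = m + n)
    (x : (Fin g → Fin M.toNat) × ((Fin g → ℤ) × (Fin g → ℤ))) :
    reindexFloer g m n M hm hn hM x =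
      (fun j => x.2.2 j + m * x.2.1 j + (x.1 j : ℤ), fun j => x.2.2 j - n * x.2.1 j) := rfl

/-! ### The abstract rearrangement chain -/

lemma tsum_chain {W P P' : Type*} [Fintype W] (e : (W × (P × P')) ≃ (P × P'))
    (F2 : P → ℂ) (F1 : P' → ℂ) (E : W → P → ℂ) (H : W → P' → ℂ)
    (hF2 : Summable fun x => ‖F2 x‖) (hF1 : Summable fun x => ‖F1 x‖)
    (hE : ∀ w, Summable fun x => ‖E w x‖) (hH : ∀ w, Summable fun x => ‖H w x‖)
    (key : ∀ y : W × (P × P'), F2 (e y).1 * F1 (e y).2 = E y.1 y.2.1 * H y.1 y.2.2) :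
    (∑' x, F2 x) * (∑' x, F1 x) = ∑ w, (∑' x, E w x) * (∑' x, H w x) := by
  rw [tsum_mul_tsum_of_summable_norm hF2 hF1,
    Finset.sum_congr rfl fun w _ => tsum_mul_tsum_of_summable_norm (hE w) (hH w)]
  have hsum : Summable fun y : W × (P × P') => E y.1 y.2.1 * H y.1 y.2.2 :=
    (((Equiv.summable_iff e).2 (summable_mul_of_summable_norm hF2 hF1)).congr
      (fun y => key y))
  have h1 : ∀ w, Summable fun x : P × P' => E w x.1 * H w x.2 := fun w =>
    summable_mul_of_summable_norm (hE w) (hH w)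
  calc (∑' x : P × P', F2 x.1 * F1 x.2)
      = ∑' y : W × (P × P'), F2 ((e y).1) * F1 ((e y).2) :=
        (Equiv.tsum_eq e (fun x : P × P' => F2 x.1 * F1 x.2)).symm
    _ = ∑' y : W × (P × P'), E y.1 y.2.1 * H y.1 y.2.2 := tsum_congr key
    _ = ∑ w, ∑' x : P × P', E w x.1 * H w x.2 := by
        rw [Summable.tsum_prod' hsum h1, tsum_fintype]

/-! ### The general multiplication formula -/

lemma theta_mul_general {g : ℕ} (hg : 0 < g) (τ : Matrix (Fin g) (Fin g) ℂ)
    (him : (τ.map Complex.im).PosDef) (z : Fin g → ℂ)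
    (m n M : ℤ) (hm : 0 < m) (hn : 0 < n) (hM : M = m + n)
    (c₁ c₂ d₁ d₂ dS dU : Fin g → ℝ)
    (cS cU : (Fin g → Fin M.toNat) → Fin g → ℝ)
    (hcS : ∀ w j, (M:ℝ) * cS w j = c₂ j - c₁ j + ((w j : ℕ):ℝ))
    (hcU : ∀ w j, (M:ℝ) * cU w j = (m:ℝ) * c₁ j + (n:ℝ) * c₂ j + (n:ℝ) * ((w j : ℕ):ℝ))
    (hdS : ∀ j, dS j = (m:ℝ) * d₂ j - (n:ℝ) * d₁ j)
    (hdU : ∀ j, dU j = d₁ j + d₂ j) :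
    thetaS c₂ d₂ ((n:ℂ) • τ) ((n:ℂ) • z) * thetaS c₁ d₁ ((m:ℂ) • τ) ((m:ℂ) • z)
      = ∑ w : Fin g → Fin M.toNat,
          thetaS (cS w) dS (((m * n * M : ℤ):ℂ) • τ) 0 *
            thetaS (cU w) dU ((M:ℂ) • τ) ((M:ℂ) • z) := by
  have hM0 : 0 < M := by omega
  have hsm : ∀ a : ℤ, 0 < a → (((a:ℂ) • τ).map Complex.im).PosDef := by
    intro a ha
    have hmap : ((a:ℂ) • τ).map Complex.im = (a:ℝ) • (τ.map Complex.im) := by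
      ext j k
      simp [Matrix.map_apply, Matrix.smul_apply, Complex.mul_im]
    rw [hmap]
    exact him.smul (by exact_mod_cast ha : (0:ℝ) < (a:ℝ))
  have S1 := theta_norm_summable hg ((m:ℂ) • τ) (hsm m hm) c₁
    (((m:ℂ) • z) + fun j => ((d₁ j : ℝ):ℂ))
  have S2 := theta_norm_summable hg ((n:ℂ) • τ) (hsm n hn) c₂
    (((n:ℂ) • z) + fun j => ((d₂ j : ℝ):ℂ))
  have SD : ∀ w : Fin g → Fin M.toNat, Summable fun nn : Fin g → ℤ =>
      ‖Complex.exp ((π : ℂ) * I * qf (((m * n * M : ℤ):ℂ) • τ)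
          (fun j => (nn j : ℂ) + (cS w j : ℂ)) +
        2 * (π : ℂ) * I * dotc (fun j => (nn j : ℂ) + (cS w j : ℂ))
          ((0 : Fin g → ℂ) + fun j => ((dS j : ℝ):ℂ)))‖ := fun w =>
    theta_norm_summable hg _ (hsm (m * n * M) (by positivity)) (cS w) _
  have SU : ∀ w : Fin g → Fin M.toNat, Summable fun nn : Fin g → ℤ =>
      ‖Complex.exp ((π : ℂ) * I * qf ((M:ℂ) • τ)
          (fun j => (nn j : ℂ) + (cU w j : ℂ)) +
        2 * (π : ℂ) * I * dotc (fun j => (nn j : ℂ) + (cU w j : ℂ))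
          (((M:ℂ) • z) + fun j => ((dU j : ℝ):ℂ)))‖ := fun w =>
    theta_norm_summable hg _ (hsm M hM0) (cU w) _
  have hMne : (M:ℂ) ≠ 0 := by
    simp only [ne_eq, Int.cast_eq_zero]; omega
  have hMmn : (M:ℂ) = (m:ℂ) + (n:ℂ) := by rw [hM]; push_cast; ring
  have hN : ((m * n * M : ℤ):ℂ) = (m:ℂ) * (n:ℂ) * (M:ℂ) := by push_cast; ring
  have key : ∀ (w : Fin g → Fin M.toNat) (t r : Fin g → ℤ),
      (Complex.exp ((π : ℂ) * I * qf ((n:ℂ) • τ)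
          (fun j => ((r j + m * t j + ((w j : ℤ)) : ℤ) : ℂ) + (c₂ j : ℂ)) +
        2 * (π : ℂ) * I * dotc (fun j => ((r j + m * t j + ((w j : ℤ)) : ℤ) : ℂ) + (c₂ j : ℂ))
          (((n:ℂ) • z) + fun j => ((d₂ j : ℝ):ℂ)))) *
      (Complex.exp ((π : ℂ) * I * qf ((m:ℂ) • τ)
          (fun j => ((r j - n * t j : ℤ) : ℂ) + (c₁ j : ℂ)) +
        2 * (π : ℂ) * I * dotc (fun j => ((r j - n * t j : ℤ) : ℂ) + (c₁ j : ℂ))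
          (((m:ℂ) • z) + fun j => ((d₁ j : ℝ):ℂ))))
      = (Complex.exp ((π : ℂ) * I * qf (((m * n * M : ℤ):ℂ) • τ)
          (fun j => (t j : ℂ) + (cS w j : ℂ)) +
        2 * (π : ℂ) * I * dotc (fun j => (t j : ℂ) + (cS w j : ℂ))
          ((0 : Fin g → ℂ) + fun j => ((dS j : ℝ):ℂ)))) *
      (Complex.exp ((π : ℂ) * I * qf ((M:ℂ) • τ)
          (fun j => (r j : ℂ) + (cU w j : ℂ)) +
        2 * (π : ℂ) * I * dotc (fun j => (r j : ℂ) + (cU w j : ℂ))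
          (((M:ℂ) • z) + fun j => ((dU j : ℝ):ℂ)))) := by
    intro w t r
    apply exp_term_eq τ z (m:ℂ) (n:ℂ) (M:ℂ) ((m * n * M : ℤ):ℂ) hMne hMmn hN
    · intro j
      have hC : ((M:ℤ):ℂ) * ((cS w j : ℝ):ℂ)
          = ((c₂ j : ℝ):ℂ) - ((c₁ j : ℝ):ℂ) + (((w j : ℕ)):ℂ) := by
        exact_mod_cast hcS w j
      push_cast
      push_cast at hC
      linear_combination hC + ((t j : ℤ):ℂ) * hMmn
    · intro j
      have hC : ((M:ℤ):ℂ) * ((cU w j : ℝ):ℂ)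
          = ((m:ℤ):ℂ) * ((c₁ j : ℝ):ℂ) + ((n:ℤ):ℂ) * ((c₂ j : ℝ):ℂ)
            + ((n:ℤ):ℂ) * (((w j : ℕ)):ℂ) := by
        exact_mod_cast hcU w j
      push_cast
      push_cast at hC
      linear_combination hC + ((r j : ℤ):ℂ) * hMmn
    · intro j
      exact_mod_cast hdS j
    · intro j
      exact_mod_cast hdU j
  simp only [thetaS]
  apply tsum_chain (reindexFloer g m n M hm hn hM) _ _ _ _ S2 S1 SD SU
  rintro ⟨w, t, r⟩
  rw [reindexFloer_apply]
  exact key w t r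

/-- the theta multiplication formula matching the Floer product `μ²`.
With `N := (k₂−k₁)(k₃−k₂)(k₃−k₁)`,
`S_w := (k₃−k₂)(λ₁ + b₂ − b₁) − (k₂−k₁)(λ₂ + b₃ − b₂) − (k₂−k₁)(k₃−k₂)w` and
`D^w := ϑ[−S_w/N, (k₂−k₁)(a₃−a₂) − (k₃−k₂)(a₂−a₁)](Nτ, 0)`, one has
`ϑ[(λ₂+b₃−b₂)/(k₃−k₂), a₃−a₂]((k₃−k₂)τ, (k₃−k₂)z)
   · ϑ[(λ₁+b₂−b₁)/(k₂−k₁), a₂−a₁]((k₂−k₁)τ, (k₂−k₁)z)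
 = ∑_{w ∈ {0,…,k₃−k₁−1}^g} D^w
   · ϑ[(λ₁+λ₂+b₃−b₁+(k₃−k₂)w)/(k₃−k₁), a₃−a₁]((k₃−k₁)τ, (k₃−k₁)z)`. -/
theorem theta_multiplication_floer (g : ℕ) (hg : 0 < g)
    (τ : Matrix (Fin g) (Fin g) ℂ) (hτ : τ ∈ Siegel g) (z : Fin g → ℂ)
    (k₁ k₂ k₃ : ℤ) (h12 : k₁ < k₂) (h23 : k₂ < k₃)
    (a₁ a₂ a₃ b₁ b₂ b₃ : Fin g → ℝ)
    (lam₁ lam₂ : Fin g → ℤ)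
    (hlam₁ : ∀ j, 0 ≤ lam₁ j ∧ lam₁ j < k₂ - k₁)
    (hlam₂ : ∀ j, 0 ≤ lam₂ j ∧ lam₂ j < k₃ - k₂) :
    thetaS (fun j => ((lam₂ j : ℝ) + b₃ j - b₂ j) / ((k₃ : ℝ) - (k₂ : ℝ)))
        (fun j => a₃ j - a₂ j)
        (((k₃ : ℂ) - (k₂ : ℂ)) • τ) (((k₃ : ℂ) - (k₂ : ℂ)) • z)
      * thetaS (fun j => ((lam₁ j : ℝ) + b₂ j - b₁ j) / ((k₂ : ℝ) - (k₁ : ℝ)))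
          (fun j => a₂ j - a₁ j)
          (((k₂ : ℂ) - (k₁ : ℂ)) • τ) (((k₂ : ℂ) - (k₁ : ℂ)) • z)
    = ∑ w : Fin g → Fin (k₃ - k₁).toNat,
        thetaS
          (fun j => -(((k₃ : ℝ) - (k₂ : ℝ)) * ((lam₁ j : ℝ) + b₂ j - b₁ j)
                - ((k₂ : ℝ) - (k₁ : ℝ)) * ((lam₂ j : ℝ) + b₃ j - b₂ j)
                - ((k₂ : ℝ) - (k₁ : ℝ)) * ((k₃ : ℝ) - (k₂ : ℝ)) * ((w j : ℕ) : ℝ))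
            / (((k₂ : ℝ) - (k₁ : ℝ)) * ((k₃ : ℝ) - (k₂ : ℝ)) * ((k₃ : ℝ) - (k₁ : ℝ))))
          (fun j => ((k₂ : ℝ) - (k₁ : ℝ)) * (a₃ j - a₂ j)
              - ((k₃ : ℝ) - (k₂ : ℝ)) * (a₂ j - a₁ j))
          ((((k₂ : ℂ) - (k₁ : ℂ)) * ((k₃ : ℂ) - (k₂ : ℂ)) * ((k₃ : ℂ) - (k₁ : ℂ))) • τ)
          0
        * thetaS
            (fun j => ((lam₁ j : ℝ) + (lam₂ j : ℝ) + b₃ j - b₁ j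
                  + ((k₃ : ℝ) - (k₂ : ℝ)) * ((w j : ℕ) : ℝ)) / ((k₃ : ℝ) - (k₁ : ℝ)))
            (fun j => a₃ j - a₁ j)
            (((k₃ : ℂ) - (k₁ : ℂ)) • τ) (((k₃ : ℂ) - (k₁ : ℂ)) • z) := by
  obtain ⟨hsym, him⟩ := hτ
  have e2 : (k₂:ℂ) - (k₁:ℂ) = ((k₂ - k₁ : ℤ):ℂ) := by push_cast; ring
  have e3 : (k₃:ℂ) - (k₂:ℂ) = ((k₃ - k₂ : ℤ):ℂ) := by push_cast; ring
  have e4 : (k₃:ℂ) - (k₁:ℂ) = ((k₃ - k₁ : ℤ):ℂ) := by push_cast; ring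
  rw [e2, e3, e4]
  have e5 : ((k₂ - k₁ : ℤ):ℂ) * ((k₃ - k₂ : ℤ):ℂ) * ((k₃ - k₁ : ℤ):ℂ)
      = (((k₂ - k₁) * (k₃ - k₂) * (k₃ - k₁) : ℤ):ℂ) := by push_cast; ring
  rw [e5]
  have hm2 : (k₁:ℝ) < (k₂:ℝ) := by exact_mod_cast h12
  have hm3 : (k₂:ℝ) < (k₃:ℝ) := by exact_mod_cast h23
  have hne1 : (k₂:ℝ) - (k₁:ℝ) ≠ 0 := sub_ne_zero.mpr hm2.ne'
  have hne2 : (k₃:ℝ) - (k₂:ℝ) ≠ 0 := sub_ne_zero.mpr hm3.ne'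
  have hne3 : (k₃:ℝ) - (k₁:ℝ) ≠ 0 := sub_ne_zero.mpr (by linarith)
  refine theta_mul_general hg τ him z (k₂ - k₁) (k₃ - k₂) (k₃ - k₁)
    (by omega) (by omega) (by omega) _ _ _ _ _ _ _ _ ?_ ?_ ?_ ?_
  · intro w j
    push_cast
    field_simp
    ring
  · intro w j
    push_cast
    field_simp
    ring
  · intro j
    push_cast
    ring
  · intro j
    ring
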